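/- arXiv:2203.13743 — 6 statements merged into one kernel-verified Lean document; each statement's English description precedes it below -/
import Mathlib

section
/- Let R be a commutative ring and x_1, ..., x_n a regular sequence in R, and set I = (x_1, ..., x_n). Then for every k ≥ 1 the sequence 0 → R/I^{k-1} → R/I^k → R/(I^k + (x_1)) → 0 is exact, where the first map is multiplication by x_1 and the second is the natural quotient map. -/
/-- The ideal generated by `x j` for `j < i`. -/
def prevIdeal {R : Type*} [CommRing R] {n : ℕ} (x : Fin n → R) (i : Fin n) : Ideal R :=
  Ideal.span {y | ∃ j : Fin n, j < i ∧ x j = y}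

/-- `x` is a regular sequence: each `x i` is a non-zero-divisor modulo the previous ones. -/
def IsRegularSeq {R : Type*} [CommRing R] {n : ℕ} (x : Fin n → R) : Prop :=
  ∀ i : Fin n, ∀ r : R, x i * r ∈ prevIdeal x i → r ∈ prevIdeal x i

/-- Multiplication by `a ∈ I` induces a map `R/I^(k-1) → R/I^k`. -/
def mulQ {R : Type*} [CommRing R] (I : Ideal R) (a : R) (ha : a ∈ I) (k : ℕ) :
    R ⧸ I ^ (k - 1) →ₗ[R] R ⧸ I ^ k :=
  Submodule.mapQ _ _ (LinearMap.lsmul R R a) (by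
    intro r hr
    rcases k with _ | k
    · simp [Submodule.mem_comap, pow_zero, Ideal.one_eq_top]
    · simp only [Submodule.mem_comap, LinearMap.lsmul_apply, smul_eq_mul]
      have h : r * a ∈ I ^ k * I := Ideal.mul_mem_mul (by simpa using hr) ha
      rw [pow_succ]
      rwa [mul_comm a r])

namespace SesAux

open MvPolynomial

variable {R : Type*} [CommRing R] {n : ℕ}

/-- The ideal generated by `x j` for `(j : ℕ) < i`. -/
def Jd (x : Fin n → R) (i : ℕ) : Ideal R :=
  Ideal.span {y | ∃ j : Fin n, (j : ℕ) < i ∧ x j = y}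

lemma Jd_mono (x : Fin n → R) {i i' : ℕ} (h : i ≤ i') : Jd x i ≤ Jd x i' :=
  Ideal.span_mono (fun _y ⟨j, hj, hxy⟩ => ⟨j, lt_of_lt_of_le hj h, hxy⟩)

lemma x_mem_Jd (x : Fin n → R) {j : Fin n} {i : ℕ} (h : (j : ℕ) < i) : x j ∈ Jd x i :=
  Ideal.subset_span ⟨j, h, rfl⟩

lemma prevIdeal_eq_Jd (x : Fin n → R) (t : Fin n) : prevIdeal x t = Jd x (t : ℕ) := rfl

lemma Jd_n (x : Fin n → R) : Jd x n = Ideal.span (Set.range x) := by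
  unfold Jd
  congr 1
  ext y
  constructor
  · rintro ⟨j, _, h⟩; exact ⟨j, h⟩
  · rintro ⟨j, h⟩; exact ⟨j, j.isLt, h⟩

/-- All monomials of `F` only involve variables `j` with `(j : ℕ) < i`. -/
def VSupp (i : ℕ) (F : MvPolynomial (Fin n) R) : Prop :=
  ∀ m : Fin n →₀ ℕ, coeff m F ≠ 0 → ∀ j : Fin n, m j ≠ 0 → (j : ℕ) < i

lemma VSupp_n (F : MvPolynomial (Fin n) R) : VSupp n F :=
  fun _m _ j _ => j.isLt

lemma VSupp.add {i : ℕ} {F G : MvPolynomial (Fin n) R} (hF : VSupp i F) (hG : VSupp i G) :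
    VSupp i (F + G) := by
  intro m hm j hj
  rw [coeff_add] at hm
  by_cases h : coeff m F = 0
  · exact hG m (by simpa [h] using hm) j hj
  · exact hF m h j hj

lemma VSupp.neg {i : ℕ} {F : MvPolynomial (Fin n) R} (hF : VSupp i F) : VSupp i (-F) := by
  intro m hm j hj
  rw [coeff_neg, neg_ne_zero] at hm
  exact hF m hm j hj

lemma VSupp.sub {i : ℕ} {F G : MvPolynomial (Fin n) R} (hF : VSupp i F) (hG : VSupp i G) :
    VSupp i (F - G) := by
  rw [sub_eq_add_neg]
  exact hF.add hG.neg

lemma VSupp.mul {i : ℕ} {F G : MvPolynomial (Fin n) R} (hF : VSupp i F) (hG : VSupp i G) :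
    VSupp i (F * G) := by
  classical
  intro m hm j hj
  have h := support_mul F G (Finsupp.mem_support_iff.mpr hm)
  rw [Finset.mem_add] at h
  obtain ⟨a, ha, b, hb, rfl⟩ := h
  rw [Finsupp.add_apply] at hj
  rcases Nat.eq_zero_or_pos (a j) with h0 | hpos
  · exact hG b (Finsupp.mem_support_iff.mp hb) j (by omega)
  · exact hF a (Finsupp.mem_support_iff.mp ha) j (by omega)

lemma VSupp.C_mul {i : ℕ} {F : MvPolynomial (Fin n) R} (r : R) (hF : VSupp i F) :
    VSupp i (C r * F) := by
  intro m hm j hj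
  rw [coeff_C_mul] at hm
  exact hF m (fun h => hm (by rw [h, mul_zero])) j hj

lemma VSupp_C {i : ℕ} (r : R) : VSupp i (C r : MvPolynomial (Fin n) R) := by
  intro m hm j hj
  rw [coeff_C] at hm
  split at hm
  · next h => rw [← h] at hj; simp at hj
  · exact absurd rfl hm

lemma VSupp_X {i : ℕ} {j : Fin n} (h : (j : ℕ) < i) : VSupp i (X j : MvPolynomial (Fin n) R) := by
  intro m hm j' hj'
  rw [coeff_X'] at hm
  split at hm
  · next he =>
    rw [← he] at hj'
    rw [Finsupp.single_apply] at hj'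
    split at hj'
    · next hjj => rwa [← hjj]
    · exact absurd rfl hj'
  · exact absurd rfl hm

lemma degree_of_homog {F : MvPolynomial (Fin n) R} {d : ℕ} (hF : F.IsHomogeneous d)
    {m : Fin n →₀ ℕ} (hm : coeff m F ≠ 0) : Finsupp.degree m = d := by
  rw [Finsupp.degree_eq_weight_one]
  exact hF hm

lemma monomial_val_mem (x : Fin n → R) {i : ℕ} (m : Fin n →₀ ℕ)
    (h : ∀ j : Fin n, m j ≠ 0 → (j : ℕ) < i) :
    (∏ j ∈ m.support, x j ^ m j) ∈ Jd x i ^ Finsupp.degree m := by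
  rw [Finsupp.degree_apply, ← Finset.prod_pow_eq_pow_sum]
  exact Ideal.prod_mem_prod fun j hj =>
    Ideal.pow_mem_pow (x_mem_Jd x (h j (Finsupp.mem_support_iff.mp hj))) _

lemma eval_mem_mul (x : Fin n → R) {i d : ℕ} {F : MvPolynomial (Fin n) R} (C' : Ideal R)
    (hF : F.IsHomogeneous d) (hS : VSupp i F) (hc : ∀ m, coeff m F ∈ C') :
    eval x F ∈ C' * Jd x i ^ d := by
  rw [eval_eq]
  refine Submodule.sum_mem _ fun m hm => ?_
  have hm' : coeff m F ≠ 0 := Finsupp.mem_support_iff.mp hm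
  have hd : Finsupp.degree m = d := degree_of_homog hF hm'
  rw [← hd]
  exact Ideal.mul_mem_mul (hc m) (monomial_val_mem x m (fun j hj => hS m hm' j hj))

lemma eval_mem (x : Fin n → R) {i d : ℕ} {F : MvPolynomial (Fin n) R}
    (hF : F.IsHomogeneous d) (hS : VSupp i F) : eval x F ∈ Jd x i ^ d := by
  have h := eval_mem_mul x (⊤ : Ideal R) hF hS (fun _ => Submodule.mem_top)
  rwa [← Ideal.one_eq_top, one_mul] at h

lemma exists_form_deg_one (x : Fin n → R) {i : ℕ} {z : R} (hz : z ∈ Jd x i) :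
    ∃ G : MvPolynomial (Fin n) R, G.IsHomogeneous 1 ∧ VSupp i G ∧ eval x G = z := by
  refine Submodule.span_induction ?_ ?_ ?_ ?_ hz
  · rintro y ⟨j, hj, rfl⟩
    exact ⟨X j, isHomogeneous_X R j, VSupp_X hj, eval_X _⟩
  · exact ⟨0, isHomogeneous_zero _ _ _, fun m hm => absurd (coeff_zero m) hm, map_zero _⟩
  · rintro a b _ _ ⟨F, hFh, hFs, hFe⟩ ⟨G, hGh, hGs, hGe⟩
    exact ⟨F + G, hFh.add hGh, hFs.add hGs, by rw [map_add, hFe, hGe]⟩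
  · rintro r a _ ⟨F, hFh, hFs, hFe⟩
    exact ⟨C r * F, hFh.C_mul r, hFs.C_mul r, by rw [map_mul, eval_C, hFe]; rfl⟩

lemma exists_form (x : Fin n → R) {i : ℕ} :
    ∀ {d : ℕ} {z : R}, z ∈ Jd x i ^ d →
      ∃ F : MvPolynomial (Fin n) R, F.IsHomogeneous d ∧ VSupp i F ∧ eval x F = z := by
  intro d
  induction d with
  | zero =>
    intro z _
    exact ⟨C z, isHomogeneous_C _ _, VSupp_C z, eval_C _⟩
  | succ d ih =>
    intro z hz
    rw [pow_succ] at hz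
    refine Submodule.mul_induction_on hz ?_ ?_
    · intro a ha b hb
      obtain ⟨F, hFh, hFs, hFe⟩ := ih ha
      obtain ⟨G, hGh, hGs, hGe⟩ := exists_form_deg_one x hb
      exact ⟨F * G, hFh.mul hGh, hFs.mul hGs, by rw [map_mul, hFe, hGe]⟩
    · rintro u v ⟨F, hFh, hFs, hFe⟩ ⟨G, hGh, hGs, hGe⟩
      exact ⟨F + G, hFh.add hGh, hFs.add hGs, by rw [map_add, hFe, hGe]⟩

lemma exists_form_coeff (x : Fin n → R) {i : ℕ} {d : ℕ} {z : R} (hz : z ∈ Jd x i ^ (d + 1)) :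
    ∃ F : MvPolynomial (Fin n) R, F.IsHomogeneous d ∧ VSupp i F ∧
      (∀ m, coeff m F ∈ Jd x i) ∧ eval x F = z := by
  rw [pow_succ] at hz
  refine Submodule.mul_induction_on hz ?_ ?_
  · intro a ha b hb
    obtain ⟨F, hFh, hFs, hFe⟩ := exists_form x ha
    refine ⟨C b * F, hFh.C_mul b, hFs.C_mul b, ?_, ?_⟩
    · intro m
      rw [coeff_C_mul]
      exact Ideal.mul_mem_right _ _ hb
    · rw [map_mul, eval_C, hFe, mul_comm]
  · rintro u v ⟨F, hFh, hFs, hFc, hFe⟩ ⟨G, hGh, hGs, hGc, hGe⟩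
    exact ⟨F + G, hFh.add hGh, hFs.add hGs,
      fun m => by rw [coeff_add]; exact Ideal.add_mem _ (hFc m) (hGc m),
      by rw [map_add, hFe, hGe]⟩

/-- Quasi-regularity from the vanishing statement. -/
lemma QR_of_Z (x : Fin n → R) {i d : ℕ}
    (hZ : ∀ F : MvPolynomial (Fin n) R, F.IsHomogeneous d → VSupp i F → eval x F = 0 →
      ∀ m, coeff m F ∈ Jd x i)
    {F : MvPolynomial (Fin n) R} (hF : F.IsHomogeneous d) (hS : VSupp i F)
    (hev : eval x F ∈ Jd x i ^ (d + 1)) :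
    ∀ m, coeff m F ∈ Jd x i := by
  obtain ⟨Q, hQh, hQs, hQc, hQe⟩ := exists_form_coeff x hev
  intro m
  have h := hZ (F - Q) (hF.sub hQh) (hS.sub hQs)
    (by rw [map_sub, hQe, sub_self]) m
  have he : coeff m F = coeff m (F - Q) + coeff m Q := by
    rw [coeff_sub]; ring
  rw [he]
  exact Ideal.add_mem _ h (hQc m)

lemma lemB (x : Fin n → R) {i : ℕ} (hi : i < n) (hreg : IsRegularSeq x)
    (hZ : ∀ d, ∀ F : MvPolynomial (Fin n) R, F.IsHomogeneous d → VSupp i F → eval x F = 0 →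
      ∀ m, coeff m F ∈ Jd x i) :
    ∀ d, ∀ z : R, x ⟨i, hi⟩ * z ∈ Jd x i ^ d → z ∈ Jd x i ^ d := by
  intro d
  induction d with
  | zero => intro z _; simp [Ideal.one_eq_top]
  | succ d ih =>
    intro z hz
    have hz' : z ∈ Jd x i ^ d := ih z (Ideal.pow_le_pow_right (Nat.le_succ d) hz)
    obtain ⟨P, hPh, hPs, hPe⟩ := exists_form x hz'
    set t : Fin n := ⟨i, hi⟩ with ht
    have hCP : ∀ m, coeff m (C (x t) * P) ∈ Jd x i := by
      refine QR_of_Z x (hZ d) (hPh.C_mul _) (hPs.C_mul _) ?_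
      rw [map_mul, eval_C, hPe]
      exact hz
    have hPc : ∀ m, coeff m P ∈ Jd x i := by
      intro m
      have h := hCP m
      rw [coeff_C_mul] at h
      have hJ : prevIdeal x t = Jd x i := prevIdeal_eq_Jd x t
      exact hJ ▸ hreg t (coeff m P) (hJ ▸ h)
    have h := eval_mem_mul x (Jd x i) hPh hPs hPc
    rw [hPe] at h
    rwa [pow_succ, mul_comm]

lemma eq_C_of_coeffs (F : MvPolynomial (Fin n) R) (h : ∀ m, coeff m F ≠ 0 → m = 0) :
    F = C (coeff 0 F) := by
  ext m'
  rw [coeff_C]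
  split
  · next h0 => rw [← h0]
  · next h0 =>
    by_contra hc
    exact h0 ((h m' hc).symm)

lemma Z_of_const (x : Fin n → R) {i : ℕ} {F : MvPolynomial (Fin n) R}
    (h : ∀ m, coeff m F ≠ 0 → m = 0) (hev : eval x F = 0) :
    ∀ m, coeff m F ∈ Jd x i := by
  have hFC := eq_C_of_coeffs F h
  have hc0 : coeff 0 F = 0 := by
    have := hev
    rw [hFC] at this
    rwa [eval_C] at this
  intro m
  by_cases hm : m = 0
  · rw [hm, hc0]; exact Ideal.zero_mem _
  · rw [hFC, coeff_C]
    split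
    · next h0 => exact absurd h0.symm hm
    · exact Ideal.zero_mem _

/-- The key "vanishing forms have coefficients in the ideal" lemma. -/
lemma Zlem (x : Fin n → R) (hreg : IsRegularSeq x) :
    ∀ i, i ≤ n → ∀ d, ∀ F : MvPolynomial (Fin n) R, F.IsHomogeneous d → VSupp i F →
      eval x F = 0 → ∀ m, coeff m F ∈ Jd x i := by
  intro i
  induction i with
  | zero =>
    intro _ d F _ hS hev
    refine Z_of_const x ?_ hev
    intro m hm
    ext j
    by_contra hj
    exact absurd (hS m hm j hj) (Nat.not_lt_zero _)
  | succ i ih =>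
    intro hin d
    have hi : i < n := hin
    set t : Fin n := ⟨i, hi⟩ with ht
    induction d with
    | zero =>
      intro F hF hS hev
      refine Z_of_const x ?_ hev
      intro m hm
      rw [← Finsupp.degree_eq_zero_iff]
      exact degree_of_homog hF hm
    | succ d ihd =>
      intro F hF hS hev m
      classical
      set s : Fin n →₀ ℕ := Finsupp.single t 1 with hs
      set H := F.modMonomial s with hH
      set F₁ := F.divMonomial s with hF₁def
      have hdecomp : H + monomial s 1 * F₁ = F := modMonomial_add_divMonomial F s
      have hHc : ∀ m', coeff m' H ≠ 0 → (¬ s ≤ m') ∧ coeff m' F ≠ 0 := by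
        intro m' h
        by_cases hle : s ≤ m'
        · rw [hH, coeff_modMonomial_of_le F hle] at h
          exact absurd rfl h
        · rw [hH, coeff_modMonomial_of_not_le F hle] at h
          exact ⟨hle, h⟩
      have hHhom : H.IsHomogeneous (d + 1) := fun m' h => hF (hHc m' h).2
      have hHsupp : VSupp i H := by
        intro m' h j hj
        obtain ⟨hle, hcF⟩ := hHc m' h
        have hj1 : (j : ℕ) < i + 1 := hS m' hcF j hj
        have hmt : m' t = 0 := by
          by_contra hmt
          exact hle (by rw [hs]; exact Finsupp.single_le_iff.mpr (by omega))
        have : (j : ℕ) ≠ i := by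
          intro hji
          apply hj
          have : j = t := Fin.ext hji
          rw [this, hmt]
        omega
      have hws : (Finsupp.weight 1) s = 1 := by
        rw [hs]
        have h1 := Finsupp.degree_single t (1 : ℕ)
        rw [Finsupp.degree_eq_weight_one] at h1
        exact h1
      have hF₁hom : F₁.IsHomogeneous d := by
        intro m' h
        rw [hF₁def, coeff_divMonomial] at h
        have h2 := hF h
        rw [map_add, hws] at h2
        omega
      have hF₁supp : VSupp (i + 1) F₁ := by
        intro m' h j hj
        rw [hF₁def, coeff_divMonomial] at h
        refine hS _ h j ?_
        rw [Finsupp.add_apply]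
        omega
      have hevm : eval x (monomial s 1) = x t := by
        rw [eval_monomial]
        simp [hs, Finsupp.prod_single_index]
      have hev2 : eval x H + x t * eval x F₁ = 0 := by
        have h := congrArg (eval x) hdecomp
        rw [map_add, map_mul, hevm] at h
        rw [h]
        exact hev
      set W := eval x F₁ with hW
      have hxtW : x t * W ∈ Jd x i ^ (d + 1) := by
        have hH' : eval x H ∈ Jd x i ^ (d + 1) := eval_mem x hHhom hHsupp
        have he : x t * W = -(eval x H) := by
          rw [eq_neg_iff_add_eq_zero, add_comm]
          exact hev2
        rw [he]
        exact neg_mem hH'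
      have hWmem : W ∈ Jd x i ^ (d + 1) := lemB x hi hreg (ih hi.le) (d + 1) W hxtW
      obtain ⟨Q, hQh, hQs, hQe⟩ := exists_form x hWmem
      have hZero : eval x (H + C (x t) * Q) = 0 := by
        rw [map_add, map_mul, eval_C, hQe]
        exact hev2
      have hsum := ih hi.le (d + 1) (H + C (x t) * Q) (hHhom.add (hQh.C_mul _))
        (hHsupp.add (hQs.C_mul _)) hZero
      have hHmem : ∀ m', coeff m' H ∈ Jd x (i + 1) := by
        intro m'
        have h1 := hsum m'
        rw [coeff_add, coeff_C_mul] at h1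
        have he : coeff m' H = (coeff m' H + x t * coeff m' Q) - x t * coeff m' Q := by ring
        rw [he]
        exact Ideal.sub_mem _ (Jd_mono x (Nat.le_succ i) h1)
          (Ideal.mul_mem_right _ _ (x_mem_Jd x (Nat.lt_succ_self i)))
      have hF₁mem : ∀ m', coeff m' F₁ ∈ Jd x (i + 1) :=
        QR_of_Z x ihd hF₁hom hF₁supp
          (Ideal.pow_right_mono (Jd_mono x (Nat.le_succ i)) (d + 1) hWmem)
      by_cases hc : s ≤ m
      · have he : m = s + (m - s) := (add_tsub_cancel_of_le hc).symm
        rw [he, ← coeff_divMonomial s F (m - s)]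
        exact hF₁mem _
      · rw [← coeff_modMonomial_of_not_le F hc]
        exact hHmem m

lemma lemA (x : Fin n → R) (hn : 0 < n) (hreg : IsRegularSeq x) :
    ∀ k, 1 ≤ k → ∀ z : R, x ⟨0, hn⟩ * z ∈ Jd x n ^ k → z ∈ Jd x n ^ (k - 1) := by
  intro k
  induction k with
  | zero => omega
  | succ k ihk =>
    intro _ z hz
    rcases Nat.eq_zero_or_pos k with hk0 | hk1
    · subst hk0; simp [Ideal.one_eq_top]
    have hz' : z ∈ Jd x n ^ (k - 1) :=
      ihk hk1 z (Ideal.pow_le_pow_right (Nat.le_succ k) hz)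
    obtain ⟨P, hPh, hPs, hPe⟩ := exists_form x hz'
    set t0 : Fin n := ⟨0, hn⟩ with ht0
    have hXP : (X t0 * P).IsHomogeneous k := by
      have h := (isHomogeneous_X R t0).mul hPh
      rwa [show 1 + (k - 1) = k by omega] at h
    have hXPev : eval x (X t0 * P) ∈ Jd x n ^ (k + 1) := by
      rw [map_mul, eval_X, hPe]
      exact hz
    have hco := QR_of_Z x (Zlem x hreg n le_rfl k) hXP (VSupp_n _) hXPev
    have hPc : ∀ m, coeff m P ∈ Jd x n := by
      intro m
      have h := hco (Finsupp.single t0 1 + m)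
      rwa [coeff_X_mul] at h
    have h := eval_mem_mul x (Jd x n) hPh (VSupp_n _) hPc
    rw [hPe] at h
    have he : Nat.succ k - 1 = (k - 1) + 1 := by omega
    rw [he, pow_succ, mul_comm]
    exact h

end SesAux

open SesAux in
/-- For a regular sequence `x_1, ..., x_n` generating `I`, the sequence
`0 → R/I^(k-1) → R/I^k → R/(I^k + (x_1)) → 0` is exact, where the first map is
multiplication by `x_1` and the second is the natural quotient map. -/
theorem ses_quotients_of_regular
    {R : Type*} [CommRing R] {n : ℕ} (hn : 0 < n) (x : Fin n → R)
    (hreg : IsRegularSeq x) (I : Ideal R) (hI : I = Ideal.span (Set.range x))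
    (k : ℕ) (hk : 1 ≤ k) :
    Function.Injective
      (mulQ I (x ⟨0, hn⟩) (by rw [hI]; exact Ideal.subset_span ⟨⟨0, hn⟩, rfl⟩) k) ∧
    Function.Exact
      (mulQ I (x ⟨0, hn⟩) (by rw [hI]; exact Ideal.subset_span ⟨⟨0, hn⟩, rfl⟩) k)
      (Ideal.Quotient.factor (S := I ^ k) (T := I ^ k ⊔ Ideal.span {x ⟨0, hn⟩}) le_sup_left) ∧
    Function.Surjective
      (Ideal.Quotient.factor (S := I ^ k) (T := I ^ k ⊔ Ideal.span {x ⟨0, hn⟩}) le_sup_left) := by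
  have hIJ : I = Jd x n := by rw [hI, Jd_n]
  refine ⟨?_, ?_, ?_⟩
  · rw [injective_iff_map_eq_zero]
    intro a ha
    obtain ⟨r, rfl⟩ := Submodule.Quotient.mk_surjective _ a
    rw [mulQ, Submodule.mapQ_apply] at ha
    have hmem : x ⟨0, hn⟩ * r ∈ I ^ k := by
      have := (Submodule.Quotient.mk_eq_zero _).mp ha
      simpa using this
    rw [Submodule.Quotient.mk_eq_zero]
    have h := lemA x hn hreg k hk r (by rwa [← hIJ])
    rwa [← hIJ] at h
  · intro y
    obtain ⟨r, rfl⟩ := Ideal.Quotient.mk_surjective y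
    constructor
    · intro h
      rw [Ideal.Quotient.factor_mk, Ideal.Quotient.eq_zero_iff_mem] at h
      obtain ⟨a, ha, b, hb, rfl⟩ := Submodule.mem_sup.mp h
      obtain ⟨c, rfl⟩ := Ideal.mem_span_singleton'.mp hb
      refine ⟨Submodule.Quotient.mk c, ?_⟩
      rw [mulQ, Submodule.mapQ_apply]
      have : (Submodule.Quotient.mk (LinearMap.lsmul R R (x ⟨0, hn⟩) c) :
          R ⧸ (I ^ k : Ideal R)) = Ideal.Quotient.mk (I ^ k) (x ⟨0, hn⟩ * c) := rfl
      rw [this, Ideal.Quotient.eq]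
      have : x ⟨0, hn⟩ * c - (a + c * x ⟨0, hn⟩) = -a := by ring
      rw [this]
      exact neg_mem ha
    · rintro ⟨w, hw⟩
      obtain ⟨c, rfl⟩ := Submodule.Quotient.mk_surjective _ w
      rw [← hw, mulQ, Submodule.mapQ_apply]
      have : (Submodule.Quotient.mk (LinearMap.lsmul R R (x ⟨0, hn⟩) c) :
          R ⧸ (I ^ k : Ideal R)) = Ideal.Quotient.mk (I ^ k) (x ⟨0, hn⟩ * c) := rfl
      rw [this, Ideal.Quotient.factor_mk, Ideal.Quotient.eq_zero_iff_mem]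
      exact Submodule.mem_sup_right (Ideal.mem_span_singleton'.mpr ⟨c, mul_comm _ _⟩)
  · intro y
    obtain ⟨r, rfl⟩ := Ideal.Quotient.mk_surjective y
    exact ⟨Ideal.Quotient.mk _ r, Ideal.Quotient.factor_mk _ r⟩
end

section
/- Let R be a commutative ring and x_1, ..., x_n a regular sequence in R with I = (x_1, ..., x_n). Then the images of x_1, ..., x_n in the I-adic completion R^∧_I = lim_k R/I^k form a regular sequence in R^∧_I. -/
open MvPolynomial

section Polynomials

variable {σ R : Type*} [CommSemiring R]

lemma homogeneousComponent_X_mul (j : σ) (d : ℕ) (H : MvPolynomial σ R) :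
    homogeneousComponent (d + 1) (X j * H) = X j * homogeneousComponent d H := by
  classical
  ext m
  simp only [coeff_homogeneousComponent, coeff_X_mul']
  by_cases hj : j ∈ m.support
  · have hjm : Finsupp.single j 1 ≤ m :=
      Finsupp.single_le_iff.2 (Nat.one_le_iff_ne_zero.2 (Finsupp.mem_support_iff.1 hj))
    have hdeg := congrArg Finsupp.degree (add_tsub_cancel_of_le hjm)
    rw [map_add, Finsupp.degree_single, add_comm] at hdeg
    simp only [hj, if_true, ← hdeg, Nat.add_right_cancel_iff]
  · simp only [hj, if_false, ite_self]

lemma exists_eq_rename_castSucc_add_X_last_mul {n : ℕ} (F : MvPolynomial (Fin (n + 1)) R) :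
    ∃ G H, F = rename Fin.castSucc G + X (Fin.last n) * H := by
  induction F using MvPolynomial.induction_on with
  | C a => exact ⟨C a, 0, by simp⟩
  | add p q hp hq =>
    obtain ⟨G, H, rfl⟩ := hp
    obtain ⟨G', H', rfl⟩ := hq
    exact ⟨G + G', H + H', by simp only [map_add]; ring⟩
  | mul_X p j hp =>
    obtain ⟨G, H, rfl⟩ := hp
    induction j using Fin.lastCases with
    | last => exact ⟨0, rename Fin.castSucc G + X (Fin.last n) * H, by simp only [map_zero]; ring⟩
    | cast j => exact ⟨G * X j, H * X j.castSucc, by simp only [map_mul, rename_X]; ring⟩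

lemma MvPolynomial.IsHomogeneous.exists_eq_rename_castSucc_add_X_last_mul {n : ℕ}
    {F : MvPolynomial (Fin (n + 1)) R} {d : ℕ} (hF : F.IsHomogeneous (d + 1)) :
    ∃ G H, G.IsHomogeneous (d + 1) ∧ H.IsHomogeneous d ∧
      F = rename Fin.castSucc G + X (Fin.last n) * H := by
  obtain ⟨G, H, hGH⟩ := _root_.exists_eq_rename_castSucc_add_X_last_mul F
  refine ⟨homogeneousComponent (d + 1) G, homogeneousComponent d H,
    homogeneousComponent_isHomogeneous _ _, homogeneousComponent_isHomogeneous _ _, ?_⟩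
  rw [← homogeneousComponent_eq_self hF, hGH, map_add, rename_homogeneousComponent,
    homogeneousComponent_X_mul]

lemma MvPolynomial.IsHomogeneous.degree_eq_of_mem_support {F : MvPolynomial σ R} {d : ℕ}
    (hF : F.IsHomogeneous d) {m : σ →₀ ℕ} (hm : m ∈ F.support) : m.degree = d := by
  rw [hF.degree_eq_sum_deg_support hm, Finsupp.degree_apply]

lemma coeff_rename_mem {τ : Type*} (f : σ → τ) {K : Ideal R} {P : MvPolynomial σ R}
    (hP : ∀ m, P.coeff m ∈ K) (m : τ →₀ ℕ) : (rename f P).coeff m ∈ K := by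
  classical
  rw [P.as_sum, map_sum, coeff_sum]
  refine Ideal.sum_mem _ fun u _ => ?_
  rw [rename_monomial, coeff_monomial]
  split_ifs
  · exact hP u
  · exact zero_mem _

variable (x : σ → R)

lemma coeff_mem_of_isHomogeneous_zero {F : MvPolynomial σ R} (hF : F.IsHomogeneous 0)
    {K : Ideal R} (h : eval x F ∈ K) (m : σ →₀ ℕ) : F.coeff m ∈ K := by
  classical
  rw [totalDegree_eq_zero_iff_eq_C.1 ((totalDegree_zero_iff_isHomogeneous _).2 hF)] at h ⊢
  rw [eval_C] at h
  rw [coeff_C]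
  split_ifs
  · exact h
  · exact zero_mem _

lemma eval_monomial_one_mem_pow (m : σ →₀ ℕ) :
    eval x (monomial m 1) ∈ Ideal.span (Set.range x) ^ m.degree :=
  (Ideal.mem_span_pow_iff_exists_isHomogeneous x _).2 ⟨_, isHomogeneous_monomial 1 rfl, rfl⟩

lemma eval_mem_mul_of_coeff_mem {K L : Ideal R} {F : MvPolynomial σ R} (hK : ∀ m, F.coeff m ∈ K)
    (hL : ∀ m ∈ F.support, eval x (monomial m 1) ∈ L) : eval x F ∈ K * L := by
  rw [F.as_sum, map_sum]
  refine Ideal.sum_mem _ fun m hm => ?_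
  rw [← mul_one (F.coeff m), ← C_mul_monomial, map_mul, eval_C]
  exact Ideal.mul_mem_mul (hK m) (hL m hm)

lemma MvPolynomial.IsHomogeneous.eval_mem_mul_pow {K : Ideal R} {F : MvPolynomial σ R} {d : ℕ}
    (hF : F.IsHomogeneous d) (hK : ∀ m, F.coeff m ∈ K) :
    eval x F ∈ K * Ideal.span (Set.range x) ^ d :=
  eval_mem_mul_of_coeff_mem x hK fun m hm =>
    hF.degree_eq_of_mem_support hm ▸ eval_monomial_one_mem_pow x m

lemma exists_isHomogeneous_mem_span_X_image {S : Set σ} {k : ℕ} {r : R}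
    (hr : r ∈ Ideal.span (Set.range x) ^ k * Ideal.span (x '' S)) :
    ∃ F : MvPolynomial σ R,
      F.IsHomogeneous (k + 1) ∧ F ∈ Ideal.span (X '' S) ∧ eval x F = r := by
  have hmap : Ideal.span (Set.range x) ^ k * Ideal.span (x '' S) = Submodule.map
      (aeval x).toLinearMap (homogeneousSubmodule σ R k * Submodule.span R (X '' S)) := by
    rw [Submodule.map_mul, ← Ideal.span_pow_eq_map_homogeneousSubmodule, Submodule.map_span,
      ← Set.image_comp]
    simp
  rw [hmap] at hr
  obtain ⟨F, hF, rfl⟩ := hr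
  refine ⟨F, ?_, ?_, rfl⟩
  · have hXS : Submodule.span R (X '' S) ≤ homogeneousSubmodule σ R 1 := by
      rw [Submodule.span_le]
      rintro _ ⟨j, -, rfl⟩
      exact isHomogeneous_X R j
    exact homogeneousSubmodule_mul k 1 (mul_le_mul_right hXS _ hF)
  · have hle : homogeneousSubmodule σ R k * Submodule.span R (X '' S) ≤
        (Ideal.span (X '' S)).restrictScalars R := Submodule.mul_le.2 fun p _ q hq =>
      (Ideal.span (X '' S)).mul_mem_left p (Submodule.span_le_restrictScalars R _ _ hq)
    exact hle hF

end Polynomials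

lemma Ideal.pow_succ_le_sup_mul_pow {R : Type*} [CommSemiring R] (J K : Ideal R) (k : ℕ) :
    (J ⊔ K) ^ (k + 1) ≤ J ^ (k + 1) ⊔ K * (J ⊔ K) ^ k := by
  induction k with
  | zero => simp
  | succ k ih =>
    calc (J ⊔ K) ^ (k + 2) = (J ⊔ K) ^ (k + 1) * J ⊔ K * (J ⊔ K) ^ (k + 1) := by
          rw [pow_succ, Ideal.mul_sup, mul_comm _ K]
      _ ≤ (J ^ (k + 1) ⊔ K * (J ⊔ K) ^ k) * J ⊔ K * (J ⊔ K) ^ (k + 1) :=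
          sup_le_sup_right (Ideal.mul_mono_left ih) _
      _ ≤ J ^ (k + 2) ⊔ K * (J ⊔ K) ^ (k + 1) := by
          rw [Ideal.sup_mul, ← pow_succ, mul_assoc, pow_succ _ (k + 1)]
          refine sup_le (sup_le le_sup_left (le_sup_of_le_right ?_)) le_sup_right
          exact Ideal.mul_mono_right (Ideal.mul_mono_right le_sup_left)

lemma Ideal.exists_mem_pow_of_add_mul_mem_sup_pow {R : Type*} [CommRing R] {J : Ideal R}
    {y g h : R} {e : ℕ}
    (hy : ∀ t, y * t ∈ J ^ (e + 1) → t ∈ J ^ (e + 1)) (hg : g ∈ J ^ (e + 1))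
    (hgh : g + y * h ∈ (J ⊔ Ideal.span {y}) ^ (e + 2)) :
    ∃ w ∈ J ^ (e + 1), g - y * w ∈ J ^ (e + 2) ∧ h + w ∈ (J ⊔ Ideal.span {y}) ^ (e + 1) := by
  obtain ⟨j, hj, _, hyu, hsum⟩ := Submodule.mem_sup.1 (pow_succ_le_sup_mul_pow J _ (e + 1) hgh)
  obtain ⟨u, hu, rfl⟩ := Ideal.mem_span_singleton_mul.1 hyu
  refine ⟨u - h, hy _ ?_, ?_, by simpa using hu⟩
  · rw [show y * (u - h) = g - j by linear_combination hsum]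
    exact sub_mem hg (Ideal.pow_le_pow_right (Nat.le_succ _) hj)
  · rwa [show g - y * (u - h) = j by linear_combination -hsum]

section QuasiRegular

variable {σ R : Type*} [CommRing R]

/-- Equivalently, `X j ↦ x j` induces an isomorphism `(R ⧸ I)[X] ≅ gr_I R`, where `I` is the ideal
generated by `x`. -/
def IsQuasiRegular (x : σ → R) : Prop :=
  ∀ (d : ℕ) (F : MvPolynomial σ R), F.IsHomogeneous d →
    eval x F ∈ Ideal.span (Set.range x) ^ (d + 1) → ∀ m, F.coeff m ∈ Ideal.span (Set.range x)

lemma isQuasiRegular_of_isEmpty [IsEmpty σ] (x : σ → R) : IsQuasiRegular x :=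
  fun d F _ hF => coeff_mem_of_isHomogeneous_zero x (isHomogeneous_of_isEmpty (f := F))
    (Ideal.pow_le_self d.succ_ne_zero hF)

namespace IsQuasiRegular

variable {x : σ → R} (hx : IsQuasiRegular x)
include hx

theorem mem_pow_of_mul_mem_pow_succ (j : σ) {r : R} {k : ℕ}
    (h : x j * r ∈ Ideal.span (Set.range x) ^ (k + 1)) : r ∈ Ideal.span (Set.range x) ^ k := by
  induction k with
  | zero => simp
  | succ k ih =>
    obtain ⟨P, hP, rfl⟩ := (Ideal.mem_span_pow_iff_exists_isHomogeneous x r).1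
      (ih (Ideal.pow_le_pow_right (Nat.le_succ _) h))
    have hXP : (X j * P).IsHomogeneous (k + 1) := by
      simpa [add_comm] using (isHomogeneous_X R j).mul hP
    have hc := hx _ _ hXP (by simpa using h)
    rw [pow_succ']
    exact hP.eval_mem_mul_pow x fun m => coeff_X_mul m j P ▸ hc _

theorem mem_pow_of_mul_mem_pow {y t : R}
    (hy : ∀ s, y * s ∈ Ideal.span (Set.range x) → s ∈ Ideal.span (Set.range x)) {k : ℕ}
    (h : y * t ∈ Ideal.span (Set.range x) ^ k) : t ∈ Ideal.span (Set.range x) ^ k := by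
  induction k with
  | zero => simp
  | succ k ih =>
    obtain ⟨P, hP, rfl⟩ := (Ideal.mem_span_pow_iff_exists_isHomogeneous x t).1
      (ih (Ideal.pow_le_pow_right (Nat.le_succ _) h))
    have hc := hx k (C y * P) (hP.C_mul y) (by simpa using h)
    rw [pow_succ']
    exact hP.eval_mem_mul_pow x fun m => hy _ (by simpa using hc m)

theorem span_image_inf_pow_succ_le (S : Set σ) (k : ℕ) :
    Ideal.span (x '' S) ⊓ Ideal.span (Set.range x) ^ (k + 1) ≤
      Ideal.span (Set.range x) ^ k * Ideal.span (x '' S) := by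
  induction k with
  | zero => simp
  | succ k ih =>
    rintro r ⟨hrS, hr⟩
    obtain ⟨F, hF, hFS, rfl⟩ :=
      exists_isHomogeneous_mem_span_X_image x (ih ⟨hrS, Ideal.pow_le_pow_right k.succ.le_succ hr⟩)
    have hmem : eval x F ∈ Ideal.span (Set.range x) *
        (Ideal.span (Set.range x) ^ k * Ideal.span (x '' S)) := by
      refine eval_mem_mul_of_coeff_mem x (hx _ F hF hr) fun m hm => ?_
      obtain ⟨j, hjS, hmj⟩ := mem_ideal_span_X_image.1 hFS m hm
      have hjm : Finsupp.single j 1 ≤ m := Finsupp.single_le_iff.2 (Nat.one_le_iff_ne_zero.2 hmj)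
      have hdeg : (m - Finsupp.single j 1).degree = k := by
        have := congrArg Finsupp.degree (add_tsub_cancel_of_le hjm)
        rw [map_add, Finsupp.degree_single, hF.degree_eq_of_mem_support hm] at this
        omega
      rw [← add_tsub_cancel_of_le hjm, ← mul_one (1 : R), ← monomial_mul, map_mul]
      refine Ideal.mul_mem_mul_rev (hdeg ▸ eval_monomial_one_mem_pow x _) ?_
      rw [← X, eval_X]
      exact Ideal.subset_span (Set.mem_image_of_mem x hjS)
    rwa [← mul_assoc, ← pow_succ'] at hmem

end IsQuasiRegular

theorem IsQuasiRegular.of_init {n : ℕ} {x : Fin (n + 1) → R} (hinit : IsQuasiRegular (Fin.init x))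
    (hlast : ∀ t, x (Fin.last n) * t ∈ Ideal.span (Set.range (Fin.init x)) →
      t ∈ Ideal.span (Set.range (Fin.init x))) : IsQuasiRegular x := by
  set J := Ideal.span (Set.range (Fin.init x))
  set y := x (Fin.last n)
  have hIJ : Ideal.span (Set.range x) = J ⊔ Ideal.span {y} := by
    conv_lhs => rw [← Fin.snoc_init_self x]
    rw [Fin.range_snoc, Ideal.span_insert, sup_comm]
  have hJI : J ≤ Ideal.span (Set.range x) := hIJ ▸ le_sup_left
  have hyI : y ∈ Ideal.span (Set.range x) := Ideal.subset_span (Set.mem_range_self _)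
  intro d
  induction d with
  | zero => exact fun F hF hFx => coeff_mem_of_isHomogeneous_zero x hF (by simpa using hFx)
  | succ e ih =>
    intro F hF hFx
    obtain ⟨G, H, hG, hH, rfl⟩ := hF.exists_eq_rename_castSucc_add_X_last_mul
    have hGx : eval x (rename Fin.castSucc G) = eval (Fin.init x) G := eval_rename _ _ _
    rw [map_add, map_mul, eval_X, hGx, hIJ] at hFx
    obtain ⟨w, hw, hGw, hHw⟩ := Ideal.exists_mem_pow_of_add_mul_mem_sup_pow
      (fun _ => hinit.mem_pow_of_mul_mem_pow hlast)
      ((Ideal.mem_span_pow_iff_exists_isHomogeneous (Fin.init x) _).2 ⟨G, hG, rfl⟩) hFx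
    have hHc := ih H hH (by
      rw [← add_sub_cancel_right (eval x H) w, hIJ]
      exact sub_mem hHw (Ideal.pow_right_mono le_sup_left _ hw))
    obtain ⟨W, hW, rfl⟩ := (Ideal.mem_span_pow_iff_exists_isHomogeneous _ _).1 hw
    have hGW := hinit (e + 1) (G - C y * W) (hG.sub (hW.C_mul y)) (by simpa using hGw)
    have hGc (m) : G.coeff m ∈ Ideal.span (Set.range x) := by
      rw [show G.coeff m = (G - C y * W).coeff m + y * W.coeff m by simp]
      exact add_mem (hJI (hGW m)) (Ideal.mul_mem_right _ _ hyI)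
    intro m
    rw [coeff_add, coeff_X_mul']
    refine add_mem (coeff_rename_mem _ hGc m) ?_
    split_ifs
    · exact hHc _
    · exact zero_mem _

end QuasiRegular

section RegularSequence

variable {R : Type*} [CommRing R] {n : ℕ}

lemma prevIdeal_eq_span_image (x : Fin n → R) (i : Fin n) :
    prevIdeal x i = Ideal.span (x '' Set.Iio i) := rfl

lemma prevIdeal_mono (x : Fin n → R) {i j : Fin n} (h : i ≤ j) : prevIdeal x i ≤ prevIdeal x j :=
  Ideal.span_mono (Set.image_mono (Set.Iio_subset_Iio h))

lemma prevIdeal_map {S : Type*} [CommRing S] (φ : R →+* S) (x : Fin n → R) (i : Fin n) :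
    prevIdeal (fun j => φ (x j)) i = (prevIdeal x i).map φ := by
  rw [prevIdeal_eq_span_image, prevIdeal_eq_span_image, Ideal.map_span, ← Set.image_comp]
  rfl

lemma prevIdeal_init (x : Fin (n + 1) → R) (i : Fin n) :
    prevIdeal (Fin.init x) i = prevIdeal x i.castSucc := by
  rw [prevIdeal_eq_span_image, prevIdeal_eq_span_image, ← Fin.image_castSucc_Iio, ← Set.image_comp]
  rfl

lemma prevIdeal_last (x : Fin (n + 1) → R) :
    prevIdeal x (Fin.last n) = Ideal.span (Set.range (Fin.init x)) := by
  have : Set.Iio (Fin.last n) = Set.range Fin.castSucc := by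
    ext i
    simp [Fin.range_castSucc, Fin.lt_def]
  rw [prevIdeal_eq_span_image, this, ← Set.range_comp]
  rfl

lemma IsRegularSeq.init {x : Fin (n + 1) → R} (hx : IsRegularSeq x) : IsRegularSeq (Fin.init x) :=
  fun i r => by
    rw [prevIdeal_init]
    exact hx i.castSucc r

theorem IsRegularSeq.isQuasiRegular : ∀ {n : ℕ} {x : Fin n → R}, IsRegularSeq x → IsQuasiRegular x
  | 0, x, _ => isQuasiRegular_of_isEmpty x
  | _ + 1, _, hx =>
    .of_init hx.init.isQuasiRegular (by simpa only [prevIdeal_last] using hx (Fin.last _))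

end RegularSequence

section QuotientTail

variable {R : Type*} [CommRing R] {n m : ℕ} {x : Fin n → R} {i : Fin n} {e : Fin m ↪o Fin n}

lemma map_mk_prevIdeal_span_image (he : Set.range e = Set.Ici i) (S : Set (Fin n)) :
    (Ideal.span (x '' S)).map (Ideal.Quotient.mk (prevIdeal x i)) =
      Ideal.span ((fun t => Ideal.Quotient.mk (prevIdeal x i) (x (e t))) '' (e ⁻¹' S)) := by
  rw [Ideal.map_span, ← Set.image_comp]
  refine le_antisymm (Ideal.span_le.2 ?_) (Ideal.span_mono ?_)
  · rintro _ ⟨j, hj, rfl⟩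
    by_cases hji : j < i
    · rw [Function.comp_apply,
        (Ideal.Quotient.eq_zero_iff_mem (I := prevIdeal x i)).2 (Ideal.subset_span ⟨j, hji, rfl⟩)]
      exact zero_mem _
    · obtain ⟨t, rfl⟩ : j ∈ Set.range e := he ▸ not_lt.1 hji
      exact Ideal.subset_span ⟨t, hj, rfl⟩
  · rintro _ ⟨t, ht, rfl⟩
    exact ⟨e t, ht, rfl⟩

lemma prevIdeal_quotient_tail (he : Set.range e = Set.Ici i) (t : Fin m) :
    prevIdeal (fun t => Ideal.Quotient.mk (prevIdeal x i) (x (e t))) t =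
      (prevIdeal x (e t)).map (Ideal.Quotient.mk (prevIdeal x i)) := by
  rw [prevIdeal_eq_span_image _ t, prevIdeal_eq_span_image x (e t), map_mk_prevIdeal_span_image he]
  congr
  ext u
  simp

lemma span_range_quotient_tail (he : Set.range e = Set.Ici i) :
    Ideal.span (Set.range fun t => Ideal.Quotient.mk (prevIdeal x i) (x (e t))) =
      (Ideal.span (Set.range x)).map (Ideal.Quotient.mk (prevIdeal x i)) := by
  rw [← Set.image_univ, ← Set.image_univ, map_mk_prevIdeal_span_image he, Set.preimage_univ]

theorem IsRegularSeq.quotient_tail (hx : IsRegularSeq x) (he : Set.range e = Set.Ici i) :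
    IsRegularSeq fun t => Ideal.Quotient.mk (prevIdeal x i) (x (e t)) := by
  intro t r hr
  obtain ⟨r, rfl⟩ := Ideal.Quotient.mk_surjective r
  have hie : i ≤ e t := (he ▸ Set.mem_range_self t : e t ∈ Set.Ici i)
  rw [← map_mul] at hr
  rw [prevIdeal_quotient_tail he, Ideal.mem_quotient_iff_mem (prevIdeal_mono x hie)] at hr ⊢
  exact hx (e t) r hr

theorem IsRegularSeq.mem_prevIdeal_sup_pow_of_mul_mem (hx : IsRegularSeq x) {r : R} {k : ℕ}
    (h : x i * r ∈ prevIdeal x i ⊔ Ideal.span (Set.range x) ^ (k + 1)) :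
    r ∈ prevIdeal x i ⊔ Ideal.span (Set.range x) ^ k := by
  obtain ⟨e, he⟩ : ∃ e : Fin _ ↪o Fin n, Set.range e = Set.Ici i :=
    ⟨(Finset.Ici i).orderEmbOfFin rfl, by simp⟩
  obtain ⟨t, ht⟩ : i ∈ Set.range e := he ▸ Set.self_mem_Ici
  rw [sup_comm, ← Ideal.mem_quotient_iff_mem_sup, Ideal.map_pow, ← span_range_quotient_tail he]
    at h ⊢
  rw [map_mul, ← congrArg x ht] at h
  exact (hx.quotient_tail he).isQuasiRegular.mem_pow_of_mul_mem_pow_succ t h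

end QuotientTail

section Completion

open AdicCompletion

variable {R : Type*} [CommRing R] {I : Ideal R}

lemma exists_coeff_seq_of_forall_mem_sup_pow {ι : Type*} [Fintype ι] {z : ι → R}
    (hAR : ∀ k, Ideal.span (Set.range z) ⊓ I ^ (k + 1) ≤ I ^ k * Ideal.span (Set.range z))
    {a : ℕ → R} (hcauchy : ∀ k, a k - a (k + 1) ∈ I ^ k)
    (ha : ∀ k, a k ∈ Ideal.span (Set.range z) ⊔ I ^ k) :
    ∃ c : ℕ → ι → R,
      (∀ k j, c k j - c (k + 1) j ∈ I ^ k) ∧ ∀ k, a k - ∑ j, c k j * z j ∈ I ^ k := by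
  have step : ∀ k (b : ι → R), a (k + 1) - ∑ j, b j * z j ∈ I ^ (k + 1) →
      ∃ b' : ι → R, (∀ j, b j - b' j ∈ I ^ k) ∧ a (k + 2) - ∑ j, b' j * z j ∈ I ^ (k + 2) := by
    intro k b hb
    obtain ⟨s, hs, e, he, hse⟩ := Submodule.mem_sup.1 (ha (k + 2))
    have hδ : s - ∑ j, b j * z j ∈ Ideal.span (Set.range z) ⊓ I ^ (k + 1) := by
      refine ⟨sub_mem hs (Ideal.sum_mem _ fun j _ => Ideal.mul_mem_left _ _
        (Ideal.subset_span (Set.mem_range_self j))), ?_⟩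
      rw [show s - ∑ j, b j * z j = (a (k + 1) - ∑ j, b j * z j) - (a (k + 1) - a (k + 2)) - e by
        rw [← hse]; ring]
      exact sub_mem (sub_mem hb (hcauchy _)) (Ideal.pow_le_pow_right (Nat.le_succ _) he)
    obtain ⟨d, hd, hdδ⟩ := (Submodule.mem_ideal_smul_span_iff_exists_sum _ z _).1 (hAR k hδ)
    refine ⟨b + d, fun j => by simpa using neg_mem (hd j), ?_⟩
    rw [Finsupp.sum_fintype _ _ (by simp)] at hdδ
    simp only [Pi.add_apply, add_mul, Finset.sum_add_distrib, smul_eq_mul] at hdδ ⊢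
    rwa [show a (k + 2) - (∑ j, b j * z j + ∑ j, d j * z j) = e by rw [hdδ, ← hse]; ring]
  choose! next hnext using step
  obtain ⟨s, hs, e, he, hse⟩ := Submodule.mem_sup.1 (ha 1)
  obtain ⟨b₀, rfl⟩ := (Submodule.mem_span_range_iff_exists_fun R).1 hs
  let c : ℕ → ι → R := fun k => Nat.rec (motive := fun _ => ι → R) b₀ next k
  have hc : ∀ k, a (k + 1) - ∑ j, c k j * z j ∈ I ^ (k + 1) := by
    intro k
    induction k with
    | zero => simpa [c, ← hse] using he
    | succ k ih => exact (hnext k (c k) ih).2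
  refine ⟨c, fun k => (hnext k (c k) (hc k)).1, fun k => ?_⟩
  rw [← sub_add_sub_cancel _ (a (k + 1))]
  exact add_mem (hcauchy k) (Ideal.pow_le_pow_right (Nat.le_succ k) (hc k))

lemma AdicCompletion.AdicCauchySequence.sub_succ_mem_pow (a : AdicCauchySequence I R) (k : ℕ) :
    a k - a (k + 1) ∈ I ^ k := by
  simpa using SModEq.sub_mem.1 (a.2 (Nat.le_succ k))

lemma mem_sup_pow_of_mkₐ_mem_map {J : Ideal R} {a : AdicCauchySequence I R}
    (h : mkₐ I a ∈ J.map (algebraMap R (AdicCompletion I R))) (k : ℕ) : a k ∈ J ⊔ I ^ k := by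
  have hk := Ideal.mem_map_of_mem (evalₐ I k).toRingHom h
  have hcomp : (evalₐ I k).toRingHom.comp (algebraMap R _) = Ideal.Quotient.mk (I ^ k) :=
    RingHom.ext fun r => (evalₐ I k).commutes r
  rw [Ideal.map_map, hcomp] at hk
  exact Ideal.mem_quotient_iff_mem_sup.1 (by simpa using hk)

theorem mkₐ_mem_map_of_forall_mem_sup_pow {ι : Type*} [Fintype ι] {z : ι → R}
    (hAR : ∀ k, Ideal.span (Set.range z) ⊓ I ^ (k + 1) ≤ I ^ k * Ideal.span (Set.range z))
    {a : AdicCauchySequence I R} (ha : ∀ k, a k ∈ Ideal.span (Set.range z) ⊔ I ^ k) :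
    mkₐ I a ∈ (Ideal.span (Set.range z)).map (algebraMap R (AdicCompletion I R)) := by
  obtain ⟨c, hc, hca⟩ := exists_coeff_seq_of_forall_mem_sup_pow hAR a.sub_succ_mem_pow ha
  let C (j : ι) : AdicCauchySequence I R :=
    AdicCauchySequence.mk I R (fun k => c k j) fun k => SModEq.sub_mem.2 (by simpa using hc k j)
  have hC : mkₐ I a = ∑ j, mkₐ I (C j) * algebraMap R _ (z j) := by
    refine ext_evalₐ fun k => ?_
    simp only [map_sum, map_mul, evalₐ_mkₐ, AlgHom.commutes, Ideal.Quotient.algebraMap_eq]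
    exact (Ideal.Quotient.eq.2 (hca k)).trans (by simp only [map_sum, map_mul]; rfl)
  rw [hC]
  exact Ideal.sum_mem _ fun j _ =>
    Ideal.mul_mem_left _ _ (Ideal.mem_map_of_mem _ (Ideal.subset_span (Set.mem_range_self j)))

end Completion

/-- A regular sequence generating the ideal `I` remains regular in the `I`-adic
completion of `R`. -/
theorem isRegularSeq_adicCompletion
    {R : Type*} [CommRing R] {n : ℕ} (x : Fin n → R) (hreg : IsRegularSeq x)
    (I : Ideal R) (hI : I = Ideal.span (Set.range x)) :
    IsRegularSeq (fun i => algebraMap R (AdicCompletion I R) (x i)) := by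
  subst hI
  intro i f hf
  obtain ⟨a, rfl⟩ := AdicCompletion.mk_surjective _ R f
  rw [prevIdeal_map] at hf ⊢
  have hxa (k : ℕ) := mem_sup_pow_of_mkₐ_mem_map (a := algebraMap R _ (x i) * a)
    (by rwa [map_mul, AlgHom.commutes]) k
  have ha (k : ℕ) : a k ∈ prevIdeal x i ⊔ Ideal.span (Set.range x) ^ k := by
    rw [← sub_add_cancel (a k) (a (k + 1)), add_comm]
    exact add_mem (hreg.mem_prevIdeal_sup_pow_of_mul_mem (r := a (k + 1)) (hxa (k + 1)))
      (Ideal.mem_sup_right (a.sub_succ_mem_pow k))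
  have hAR := hreg.isQuasiRegular.span_image_inf_pow_succ_le (Set.Iio i)
  rw [prevIdeal_eq_span_image, Set.image_eq_range] at ha ⊢
  rw [Set.image_eq_range] at hAR
  exact mkₐ_mem_map_of_forall_mem_sup_pow hAR ha
end

section
/- Let R be a commutative ring and x_1, ..., x_n a regular sequence generating an ideal I. Then for every k, the k-th graded piece I^k/I^{k+1} of the I-adic filtration is a free R/I-module, isomorphic to the degree-k part of the polynomial ring (R/I)[X_1, ..., X_n] via the map sending X_i to the class of x_i; in other words, a regular sequence is quasi-regular. -/
open MvPolynomial

namespace MvPolynomial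

variable {σ R : Type*} [CommSemiring R] {s : Set σ} {k : ℕ} {P : MvPolynomial σ R}

theorem mem_supported_iff_coeff :
    P ∈ supported R s ↔ ∀ d, coeff d P ≠ 0 → ∀ i, d i ≠ 0 → i ∈ s := by
  simp only [mem_supported, Set.subset_def, Finset.mem_coe, mem_vars_iff_mem_support,
    mem_support_iff, Finsupp.mem_support_iff, ne_eq, forall_exists_index, and_imp]
  exact ⟨fun h d hd i hi => h i d hd hi, fun h i d hd hi => h d hd i hi⟩

theorem isHomogeneous_iff_degree :
    P.IsHomogeneous k ↔ ∀ d, coeff d P ≠ 0 → d.degree = k := by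
  simp [IsHomogeneous, IsWeightedHomogeneous, Finsupp.degree_eq_weight_one, Pi.one_def]

theorem exists_eq_X_mul_add {a : σ} (hP : P ∈ supported R (insert a s))
    (hk : P.IsHomogeneous (k + 1)) :
    ∃ P₁ P₀ : MvPolynomial σ R, P₁ ∈ supported R (insert a s) ∧ P₁.IsHomogeneous k ∧
      P₀ ∈ supported R s ∧ P₀.IsHomogeneous (k + 1) ∧ P = X a * P₁ + P₀ := by
  classical
  set e : σ →₀ ℕ := Finsupp.single a 1
  have hmod : ∀ d, coeff d (P.modMonomial e) ≠ 0 → ¬ e ≤ d ∧ coeff d P ≠ 0 := by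
    intro d hd
    by_cases hle : e ≤ d
    · simp [coeff_modMonomial_of_le _ hle] at hd
    · exact ⟨hle, by rwa [coeff_modMonomial_of_not_le _ hle] at hd⟩
  refine ⟨P.divMonomial e, P.modMonomial e, ?_, ?_, ?_, ?_,
    (divMonomial_add_modMonomial P e).symm⟩
  · refine mem_supported_iff_coeff.2 fun d hd i hi => mem_supported_iff_coeff.1 hP _
      (by rwa [coeff_divMonomial] at hd) i ?_
    rw [Finsupp.add_apply]
    omega
  · refine isHomogeneous_iff_degree.2 fun d hd => ?_
    have := isHomogeneous_iff_degree.1 hk _ (by rwa [coeff_divMonomial] at hd)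
    rw [map_add, Finsupp.degree_single] at this
    omega
  · refine mem_supported_iff_coeff.2 fun d hd i hi => ?_
    obtain ⟨hle, hd⟩ := hmod d hd
    obtain rfl | hi' := mem_supported_iff_coeff.1 hP d hd i hi
    · exact absurd (Finsupp.single_le_iff.2 (Nat.one_le_iff_ne_zero.2 hi)) hle
    · exact hi'
  · exact isHomogeneous_iff_degree.2 fun d hd => isHomogeneous_iff_degree.1 hk d (hmod d hd).2

theorem eval_mem_mul_pow (x : σ → R) {K : Ideal R} (hP : P ∈ supported R s)
    (hk : P.IsHomogeneous k) (hK : ∀ d, coeff d P ∈ K) :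
    eval x P ∈ K * Ideal.span (x '' s) ^ k := by
  rw [eval_eq]
  refine Submodule.sum_mem _ fun d hd => Ideal.mul_mem_mul (hK d) ?_
  rw [mem_support_iff] at hd
  rw [← isHomogeneous_iff_degree.1 hk d hd, Finsupp.degree_apply, ← Finset.prod_pow_eq_pow_sum]
  refine Ideal.prod_mem_prod fun i hi => Ideal.pow_mem_pow (Ideal.subset_span ?_) _
  exact Set.mem_image_of_mem x
    (mem_supported_iff_coeff.1 hP d hd i (Finsupp.mem_support_iff.1 hi))

theorem eval_mem_pow (x : σ → R) (hP : P ∈ supported R s) (hk : P.IsHomogeneous k) :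
    eval x P ∈ Ideal.span (x '' s) ^ k := by
  simpa using eval_mem_mul_pow x (K := ⊤) hP hk fun _ => Submodule.mem_top

theorem exists_eval_eq_of_mem_pow (x : σ → R) {y : R} (hy : y ∈ Ideal.span (x '' s) ^ k) :
    ∃ P ∈ supported R s, P.IsHomogeneous k ∧ eval x P = y := by
  rw [Set.image_eq_range] at hy
  obtain ⟨p, hp, rfl⟩ := (Ideal.mem_span_pow_iff_exists_isHomogeneous _ y).1 hy
  refine ⟨rename Subtype.val p, ?_, hp.rename_isHomogeneous, eval_rename _ _ _⟩
  rw [supported_eq_range_rename]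
  exact ⟨p, rfl⟩

theorem exists_eval_eq_of_mem_mul_pow (x : σ → R) {K : Ideal R} {y : R}
    (hy : y ∈ K * Ideal.span (x '' s) ^ k) :
    ∃ P ∈ supported R s, P.IsHomogeneous k ∧ (∀ d, coeff d P ∈ K) ∧ eval x P = y := by
  refine Submodule.mul_induction_on hy (fun a ha b hb => ?_) fun y z hy hz => ?_
  · obtain ⟨Q, hQs, hQk, rfl⟩ := exists_eval_eq_of_mem_pow x hb
    refine ⟨C a * Q, Subalgebra.mul_mem _ (Subalgebra.algebraMap_mem _ a) hQs, hQk.C_mul a,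
      fun d => ?_, by simp⟩
    rw [coeff_C_mul]
    exact K.mul_mem_right _ ha
  · obtain ⟨P, hPs, hPk, hPK, rfl⟩ := hy
    obtain ⟨Q, hQs, hQk, hQK, rfl⟩ := hz
    refine ⟨P + Q, add_mem hPs hQs, hPk.add hQk, fun d => ?_, map_add _ _ _⟩
    rw [coeff_add]
    exact add_mem (hPK d) (hQK d)

end MvPolynomial

section QuasiRegular

variable {σ R : Type*}

/-- The injectivity half of quasi-regularity of `(x i)_{i ∈ s}`; the surjectivity half holds for
every family (`exists_eval_eq_of_mem_pow`). -/
def IsQuasiRegularOn [CommSemiring R] (x : σ → R) (s : Set σ) : Prop :=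
  ∀ k (P : MvPolynomial σ R), P ∈ supported R s → P.IsHomogeneous k →
    eval x P ∈ Ideal.span (x '' s) ^ (k + 1) → ∀ d, coeff d P ∈ Ideal.span (x '' s)

theorem isQuasiRegularOn_empty [CommSemiring R] (x : σ → R) : IsQuasiRegularOn x ∅ := by
  intro k P hP _ hE d
  rw [supported_empty, Algebra.mem_bot] at hP
  obtain ⟨c, rfl⟩ := hP
  rw [Set.image_empty, Ideal.span_empty, ← Ideal.zero_eq_bot, zero_pow k.succ_ne_zero,
    Ideal.zero_eq_bot, Ideal.mem_bot, algebraMap_eq, eval_C] at hE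
  simp [hE]

variable [CommRing R] {x : σ → R} {s : Set σ} {a : σ}

theorem IsQuasiRegularOn.isSMulRegular_quotient_pow (hs : IsQuasiRegularOn x s) {t : R}
    (ht : IsSMulRegular (R ⧸ Ideal.span (x '' s)) t) (m : ℕ) :
    IsSMulRegular (R ⧸ Ideal.span (x '' s) ^ m) t := by
  rw [isSMulRegular_quotient_iff_mem_of_smul_mem] at ht ⊢
  induction m with
  | zero => simp
  | succ m ih =>
    intro r h
    obtain ⟨Q, hQs, hQk, rfl⟩ :=
      exists_eval_eq_of_mem_pow x (ih _ (Ideal.pow_le_pow_right m.le_succ h))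
    have hc := hs m (C t * Q) (Subalgebra.mul_mem _ (Subalgebra.algebraMap_mem _ t) hQs)
      (hQk.C_mul t) (by rwa [map_mul, eval_C])
    rw [pow_succ']
    exact eval_mem_mul_pow x hQs hQk fun d =>
      ht _ (by simpa only [coeff_C_mul, smul_eq_mul] using hc d)

theorem IsQuasiRegularOn.coeff_mem_of_eval_mem_insert (hs : IsQuasiRegularOn x s)
    (ha : IsSMulRegular (R ⧸ Ideal.span (x '' s)) (x a))
    {k : ℕ} {P : MvPolynomial σ R} (hPs : P ∈ supported R s) (hPk : P.IsHomogeneous k)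
    (hE : eval x P ∈ Ideal.span (x '' insert a s) ^ (k + 1)) :
    ∀ d, coeff d P ∈ Ideal.span (x '' insert a s) := by
  obtain ⟨Q, hQs, hQk, hQE⟩ := exists_eval_eq_of_mem_pow x hE
  obtain ⟨Q₁, Q₀, hQ₁s, hQ₁k, hQ₀s, hQ₀k, rfl⟩ := exists_eq_X_mul_add hQs hQk
  have hsplit : eval x P = x a * eval x Q₁ + eval x Q₀ := by simp [← hQE]
  have hQ₀ := eval_mem_pow x hQ₀s hQ₀k
  have hQ₁ : eval x Q₁ ∈ Ideal.span (x '' s) ^ k := by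
    refine mem_of_isSMulRegular_quotient_of_smul_mem (hs.isSMulRegular_quotient_pow ha k) ?_
    rw [smul_eq_mul, eq_sub_of_add_eq hsplit.symm]
    exact sub_mem (eval_mem_pow x hPs hPk) (Ideal.pow_le_pow_right k.le_succ hQ₀)
  obtain ⟨U, hUs, hUk, hUE⟩ := exists_eval_eq_of_mem_pow x hQ₁
  have hPU := hs k (P - C (x a) * U)
    (sub_mem hPs (Subalgebra.mul_mem _ (Subalgebra.algebraMap_mem _ _) hUs))
    (hPk.sub (hUk.C_mul _))
    (by rwa [map_sub, map_mul, eval_C, hUE, hsplit, add_sub_cancel_left])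
  have hJ : Ideal.span (x '' s) ≤ Ideal.span (x '' insert a s) :=
    Ideal.span_mono (Set.image_mono (Set.subset_insert a s))
  have ha' : C (x a) ∈ Ideal.map (C : R →+* MvPolynomial σ R) (Ideal.span (x '' insert a s)) :=
    Ideal.mem_map_of_mem _ (Ideal.subset_span (Set.mem_image_of_mem x (Set.mem_insert a s)))
  rw [← mem_map_C_iff, ← sub_add_cancel P (C (x a) * U)]
  exact add_mem (Ideal.map_mono hJ (mem_map_C_iff.2 hPU)) (Ideal.mul_mem_right _ _ ha')

theorem IsQuasiRegularOn.insert_of_isSMulRegular (hs : IsQuasiRegularOn x s)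
    (ha : IsSMulRegular (R ⧸ Ideal.span (x '' s)) (x a)) :
    IsQuasiRegularOn x (insert a s) := by
  have hJ : Ideal.span (x '' s) ≤ Ideal.span (x '' insert a s) :=
    Ideal.span_mono (Set.image_mono (Set.subset_insert a s))
  have ha' : x a ∈ Ideal.span (x '' insert a s) :=
    Ideal.subset_span (Set.mem_image_of_mem x (Set.mem_insert a s))
  intro k
  induction k with
  | zero =>
    intro P _ hP hE d
    rw [totalDegree_eq_zero_iff_eq_C.1 ((totalDegree_zero_iff_isHomogeneous σ).2 hP)] at hE ⊢
    rw [eval_C, zero_add, pow_one] at hE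
    classical
    rw [coeff_C]
    split_ifs
    exacts [hE, zero_mem _]
  | succ k ih =>
    intro P hPs hPk hE
    rw [pow_succ'] at hE
    obtain ⟨G, hGs, hGk, hGc, hGE⟩ := exists_eval_eq_of_mem_mul_pow x hE
    obtain ⟨H₁, H₀, hH₁s, hH₁k, hH₀s, hH₀k, hH⟩ :=
      exists_eq_X_mul_add (sub_mem hPs hGs) (hPk.sub hGk)
    have hHE : x a * eval x H₁ + eval x H₀ = 0 := by
      have := congr_arg (eval x) hH
      rwa [map_sub, hGE, sub_self, map_add, map_mul, eval_X, eq_comm] at this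
    have hH₁ : eval x H₁ ∈ Ideal.span (x '' insert a s) ^ (k + 1) := by
      refine Ideal.pow_right_mono hJ _
        (mem_of_isSMulRegular_quotient_of_smul_mem (hs.isSMulRegular_quotient_pow ha _) ?_)
      rw [smul_eq_mul, eq_neg_of_add_eq_zero_left hHE]
      exact neg_mem (eval_mem_pow x hH₀s hH₀k)
    have hc₁ := ih H₁ hH₁s hH₁k hH₁
    have hH₀ : eval x H₀ ∈ Ideal.span (x '' insert a s) ^ (k + 1 + 1) := by
      rw [eq_neg_of_add_eq_zero_right hHE, pow_succ', pow_succ']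
      exact neg_mem (Ideal.mul_mem_mul ha' (eval_mem_mul_pow x hH₁s hH₁k hc₁))
    have hc₀ := hs.coeff_mem_of_eval_mem_insert ha hH₀s hH₀k hH₀
    rw [← mem_map_C_iff, ← sub_add_cancel P G, hH]
    exact add_mem (add_mem (Ideal.mul_mem_left _ _ (mem_map_C_iff.2 hc₁)) (mem_map_C_iff.2 hc₀))
      (mem_map_C_iff.2 hGc)

end QuasiRegular

theorem IsRegularSeq.isQuasiRegularOn_univ {R : Type*} [CommRing R] {n : ℕ} {x : Fin n → R}
    (hreg : IsRegularSeq x) : IsQuasiRegularOn x Set.univ := by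
  have hprefix : ∀ j ≤ n, IsQuasiRegularOn x {i : Fin n | (i : ℕ) < j} := by
    intro j
    induction j with
    | zero => simpa using isQuasiRegularOn_empty x
    | succ j ih =>
      intro hj
      have hset : {i : Fin n | (i : ℕ) < j + 1} =
          insert (⟨j, hj⟩ : Fin n) {i : Fin n | (i : ℕ) < j} := by
        ext i
        simp only [Order.lt_add_one_iff, Set.mem_ofPred_eq, Set.mem_insert_iff, Fin.ext_iff]
        omega
      rw [hset]
      exact (ih (by omega)).insert_of_isSMulRegular
        ((isSMulRegular_quotient_iff_mem_of_smul_mem _ _).2 (hreg ⟨j, hj⟩))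
  simpa using hprefix n le_rfl

/-- A regular sequence is quasi-regular: the natural surjection from the degree-`k`
homogeneous polynomials over `R/I` onto `I^k/I^(k+1)` (sending `X_i` to the class of `x_i`)
is an isomorphism, so `I^k/I^(k+1)` is a free `R/I`-module. -/
theorem quasiRegular_of_regular
    {R : Type*} [CommRing R] {n : ℕ} (x : Fin n → R) (hreg : IsRegularSeq x)
    (I : Ideal R) (hI : I = Ideal.span (Set.range x)) (k : ℕ) :
    -- surjectivity: every element of I^k is the value of a homogeneous degree-k polynomial
    -- modulo I^(k+1)
    (∀ y ∈ I ^ k, ∃ P : MvPolynomial (Fin n) R, P.IsHomogeneous k ∧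
      MvPolynomial.eval x P - y ∈ I ^ (k + 1)) ∧
    -- injectivity: a homogeneous degree-k polynomial whose value lies in I^(k+1) has all
    -- coefficients in I
    (∀ P : MvPolynomial (Fin n) R, P.IsHomogeneous k →
      MvPolynomial.eval x P ∈ I ^ (k + 1) → ∀ m, MvPolynomial.coeff m P ∈ I) := by
  subst hI
  refine ⟨fun y hy => ?_, fun P hP hE => ?_⟩
  · obtain ⟨P, hP, rfl⟩ := (Ideal.mem_span_pow_iff_exists_isHomogeneous x y).1 hy
    exact ⟨P, hP, by rw [sub_self]; exact zero_mem _⟩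
  · rw [← Set.image_univ] at hE ⊢
    exact hreg.isQuasiRegularOn_univ k P (by simp [supported_univ]) hP hE
end

section
/- Let φ : R → S be a homomorphism of commutative rings such that p is a non-zero-divisor in both R and S and the induced map R/pR → S/pS is injective, where p is a fixed element of ℤ mapped into R and S via the unit maps. Let f ∈ R[[t]] be a power series with constant coefficient f(0) = p. Then the induced ring homomorphism R[[t]]/(f) → S[[t]]/(φ(f)) is injective, where φ(f) denotes the image of f under the coefficientwise extension of φ. -/
open PowerSeries Finset

noncomputable def auxQ {R S : Type*} [CommRing R] [CommRing S] (φ : R →+* S) (p : ℤ)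
    (f g : PowerSeries R) (h : PowerSeries S) : ℕ → R
  | n =>
    @dite R (∃ a : R, φ a = PowerSeries.coeff n h ∧
        (p : R) * a = PowerSeries.coeff n g - ∑ i ∈ Finset.range n,
          PowerSeries.coeff (i + 1) f *
            (if hi : n - (i + 1) < n then auxQ φ p f g h (n - (i + 1)) else 0))
      (Classical.dec _) (fun hx => hx.choose) (fun _ => 0)
  decreasing_by all_goals exact hi

/-- If `φ : R → S` is injective mod `p`, with `p` a non-zero-divisor in `R` and `S`,
and `f ∈ R⟦t⟧` has constant coefficient `p`, then the induced map
`R⟦t⟧/(f) → S⟦t⟧/(φ f)` is injective. -/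
theorem quotient_powerSeries_map_injective
    {R S : Type*} [CommRing R] [CommRing S] (φ : R →+* S) (p : ℤ)
    (hpR : (p : R) ∈ nonZeroDivisors R) (hpS : (p : S) ∈ nonZeroDivisors S)
    (hmodp : ∀ r : R, φ r ∈ Ideal.span {(p : S)} → r ∈ Ideal.span {(p : R)})
    (f : PowerSeries R) (hf : PowerSeries.constantCoeff f = (p : R)) :
    ∀ g : PowerSeries R,
      PowerSeries.map φ g ∈ Ideal.span {PowerSeries.map φ f} → g ∈ Ideal.span {f} := by
  intro g hg
  rw [Ideal.mem_span_singleton] at hg ⊢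
  obtain ⟨h, hh⟩ := hg
  set q : ℕ → R := auxQ φ p f g h with hq
  have spec : ∀ n, φ (q n) = PowerSeries.coeff n h ∧
      (p : R) * q n = PowerSeries.coeff n g -
        ∑ i ∈ Finset.range n, PowerSeries.coeff (i + 1) f * q (n - (i + 1)) := by
    intro n
    induction n using Nat.strongRecOn with
    | ind n ih =>
      have hsum : ∀ x : R → R,
          (∑ i ∈ Finset.range n, PowerSeries.coeff (i + 1) f *
            (if hi : n - (i + 1) < n then q (n - (i + 1)) else 0)) =
          ∑ i ∈ Finset.range n, PowerSeries.coeff (i + 1) f * q (n - (i + 1)) := by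
        intro _
        refine Finset.sum_congr rfl fun i hi => ?_
        rw [dif_pos (by simp at hi; omega)]
      have hφf0 : φ (PowerSeries.coeff 0 f) = (p : S) := by
        rw [PowerSeries.coeff_zero_eq_constantCoeff, hf, map_intCast]
      have key : φ (PowerSeries.coeff n g -
          ∑ i ∈ Finset.range n, PowerSeries.coeff (i + 1) f * q (n - (i + 1))) =
          (p : S) * PowerSeries.coeff n h := by
        have h1 : φ (PowerSeries.coeff n g) =
            ∑ k ∈ Finset.range (n + 1), φ (PowerSeries.coeff k f) *
              PowerSeries.coeff (n - k) h := by
          have := congrArg (PowerSeries.coeff (R := S) n) hh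
          rw [PowerSeries.coeff_map, PowerSeries.coeff_mul,
            Finset.Nat.sum_antidiagonal_eq_sum_range_succ_mk] at this
          simpa [PowerSeries.coeff_map] using this
        rw [map_sub, h1, Finset.sum_range_succ', map_sum]
        have h2 : ∀ i ∈ Finset.range n,
            φ (PowerSeries.coeff (i + 1) f * q (n - (i + 1))) =
            φ (PowerSeries.coeff (i + 1) f) * PowerSeries.coeff (n - (i + 1)) h := by
          intro i hi
          rw [map_mul, (ih (n - (i + 1)) (by simp at hi; omega)).1]
        rw [Finset.sum_congr rfl h2]
        simp only [Nat.sub_zero, PowerSeries.coeff_zero_eq_constantCoeff, hf, map_intCast]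
        ring
      have hex : ∃ a : R, φ a = PowerSeries.coeff n h ∧
          (p : R) * a = PowerSeries.coeff n g - ∑ i ∈ Finset.range n,
            PowerSeries.coeff (i + 1) f *
              (if hi : n - (i + 1) < n then q (n - (i + 1)) else 0) := by
        have hmem : (PowerSeries.coeff n g -
            ∑ i ∈ Finset.range n, PowerSeries.coeff (i + 1) f * q (n - (i + 1)))
            ∈ Ideal.span {(p : R)} := by
          apply hmodp
          rw [key, Ideal.mem_span_singleton]
          exact ⟨PowerSeries.coeff n h, rfl⟩
        rw [Ideal.mem_span_singleton] at hmem
        obtain ⟨a, ha⟩ := hmem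
        refine ⟨a, ?_, by rw [hsum id, ← ha]⟩
        have : (p : S) * φ a = (p : S) * PowerSeries.coeff n h := by
          rw [← key, ha, map_mul, map_intCast]
        exact (mul_cancel_left_mem_nonZeroDivisors hpS).mp this
      have hunfold : q n = hex.choose := by
        show auxQ φ p f g h n = hex.choose
        rw [auxQ]
        exact dif_pos hex
      rw [hunfold]
      refine ⟨hex.choose_spec.1, ?_⟩
      rw [hex.choose_spec.2, hsum id]
  refine ⟨PowerSeries.mk q, ?_⟩
  ext n
  rw [PowerSeries.coeff_mul, Finset.Nat.sum_antidiagonal_eq_sum_range_succ_mk,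
    Finset.sum_range_succ']
  simp only [PowerSeries.coeff_mk]
  simp only [Nat.sub_zero, PowerSeries.coeff_zero_eq_constantCoeff, hf]
  linear_combination - (spec n).2
end

section
/- Let R be a commutative ring in which p is a non-zero-divisor, and let f ∈ R[[t]] have constant coefficient f(0) = p. Then for every n ≥ 0, the n-th graded piece of the t-adic filtration on R[[t]]/(f), namely (t^n·R[[t]] + (f))/(t^{n+1}·R[[t]] + (f)), is isomorphic as an R-module to R/pR. -/
open PowerSeries

private lemma aux_xpow_dvd {R : Type*} [CommRing R] {p : R} (hp : p ∈ nonZeroDivisors R)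
    {f : PowerSeries R} (hf : PowerSeries.constantCoeff f = p) :
    ∀ (n : ℕ) (b : PowerSeries R), (∀ k < n, PowerSeries.coeff k (b * f) = 0) →
      (PowerSeries.X : PowerSeries R) ^ n ∣ b := by
  intro n
  induction n with
  | zero => intro b _; simp
  | succ n ih =>
    intro b hb
    have h0 : PowerSeries.constantCoeff b = 0 := by
      have h := hb 0 (Nat.succ_pos n)
      rw [PowerSeries.coeff_zero_eq_constantCoeff, map_mul, hf] at h
      exact hp.2 _ h
    obtain ⟨b', rfl⟩ := PowerSeries.X_dvd_iff.2 h0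
    have hd : (PowerSeries.X : PowerSeries R) ^ n ∣ b' := by
      apply ih
      intro k hk
      have h := hb (k + 1) (Nat.succ_lt_succ hk)
      rwa [mul_assoc, PowerSeries.coeff_succ_X_mul] at h
    obtain ⟨c, rfl⟩ := hd
    exact ⟨c, by ring⟩

/-- For `f ∈ R⟦t⟧` with constant coefficient a prime `p` which is a non-zero-divisor in `R`,
the `n`-th graded piece of the `t`-adic filtration on `R⟦t⟧/(f)`, i.e.
`(tⁿR⟦t⟧ + (f))/(tⁿ⁺¹R⟦t⟧ + (f))`, is isomorphic to `R/pR` as an `R`-module. -/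
theorem graded_piece_iso_mod_p
    {R : Type*} [CommRing R] (p : ℕ) (hp : p.Prime)
    (hpR : (p : R) ∈ nonZeroDivisors R)
    (f : PowerSeries R) (hf : PowerSeries.constantCoeff f = (p : R)) (n : ℕ)
    (J : ℕ → Submodule R (PowerSeries R))
    (hJ : ∀ m, J m =
      (Ideal.span {(PowerSeries.X : PowerSeries R) ^ m} ⊔ Ideal.span {f}).restrictScalars R) :
    Nonempty ((J n ⧸ Submodule.comap (J n).subtype (J (n + 1)))
      ≃ₗ[R] (R ⧸ Ideal.span {(p : R)})) := by
  classical
  have hXn : (PowerSeries.X : PowerSeries R) ^ n ∈ J n := by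
    rw [hJ n]
    exact Submodule.mem_sup_left (Ideal.mem_span_singleton.2 dvd_rfl)
  set M := (J n ⧸ Submodule.comap (J n).subtype (J (n + 1))) with hM
  let φ : R →ₗ[R] M :=
    (Submodule.mkQ _).comp
      ((LinearMap.toSpanSingleton R (PowerSeries R)
        ((PowerSeries.X : PowerSeries R) ^ n)).codRestrict (J n)
        (fun r => Submodule.smul_mem _ r hXn))
  have hφ : ∀ r : R, φ r = Submodule.Quotient.mk
      ⟨r • (PowerSeries.X : PowerSeries R) ^ n, Submodule.smul_mem _ r hXn⟩ := fun r => rfl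
  -- surjectivity
  have hsurj : Function.Surjective φ := by
    intro x
    obtain ⟨⟨g, hg⟩, rfl⟩ := Submodule.Quotient.mk_surjective _ x
    have hg' : g ∈ Ideal.span {(PowerSeries.X : PowerSeries R) ^ n} ⊔ Ideal.span {f} := by
      rw [hJ n] at hg; exact hg
    obtain ⟨a, ha, b, hb, hab⟩ := Submodule.mem_sup.1 hg'
    obtain ⟨c, rfl⟩ := Ideal.mem_span_singleton'.1 ha
    obtain ⟨d, rfl⟩ := Ideal.mem_span_singleton'.1 hb
    refine ⟨PowerSeries.constantCoeff c, ?_⟩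
    rw [hφ]
    apply (Submodule.Quotient.eq _).2
    show ((PowerSeries.constantCoeff c) •
        (PowerSeries.X : PowerSeries R) ^ n - g) ∈ J (n + 1)
    rw [hJ (n + 1)]
    show _ ∈ Ideal.span {(PowerSeries.X : PowerSeries R) ^ (n+1)} ⊔ Ideal.span {f}
    have hXdvd : (PowerSeries.X : PowerSeries R) ∣
        (PowerSeries.C (PowerSeries.constantCoeff c) - c) := by
      rw [PowerSeries.X_dvd_iff]
      simp
    obtain ⟨u, hu⟩ := hXdvd
    have key : (PowerSeries.constantCoeff c) • (PowerSeries.X : PowerSeries R) ^ n - g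
        = (u * (PowerSeries.X : PowerSeries R) ^ (n+1)) + (-d) * f := by
      rw [← hab, PowerSeries.smul_eq_C_mul]
      have : PowerSeries.C (PowerSeries.constantCoeff c)
          = c + (PowerSeries.X : PowerSeries R) * u := by
        rw [← hu]; ring
      rw [this]; ring
    rw [key]
    exact Submodule.add_mem _
      (Submodule.mem_sup_left (Ideal.mem_span_singleton'.2 ⟨u, rfl⟩))
      (Submodule.mem_sup_right (Ideal.mem_span_singleton'.2 ⟨-d, rfl⟩))
  -- kernel
  have hker : LinearMap.ker φ = Ideal.span {(p : R)} := by
    ext r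
    rw [LinearMap.mem_ker, hφ, Submodule.Quotient.mk_eq_zero, Submodule.mem_comap]
    show r • (PowerSeries.X : PowerSeries R) ^ n ∈ J (n + 1) ↔ _
    rw [hJ (n + 1)]
    constructor
    · intro h
      obtain ⟨a, ha, b, hb, hab⟩ := Submodule.mem_sup.1 h
      obtain ⟨a', rfl⟩ := Ideal.mem_span_singleton'.1 ha
      obtain ⟨b', rfl⟩ := Ideal.mem_span_singleton'.1 hb
      -- coefficients of b' * f below n vanish
      have hlow : ∀ k < n, PowerSeries.coeff k (b' * f) = 0 := by
        intro k hk
        have : PowerSeries.coeff k (b' * f)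
            = PowerSeries.coeff k (r • (PowerSeries.X : PowerSeries R) ^ n)
              - PowerSeries.coeff k (a' * (PowerSeries.X : PowerSeries R) ^ (n+1)) := by
          rw [← hab]; simp [mul_add]
        rw [this]
        have h1 : PowerSeries.coeff k (r • (PowerSeries.X : PowerSeries R) ^ n) = 0 := by
          rw [PowerSeries.smul_eq_C_mul, PowerSeries.coeff_C_mul,
            PowerSeries.coeff_X_pow, if_neg (Nat.ne_of_lt hk)]
          ring
        have h2 : PowerSeries.coeff k (a' * (PowerSeries.X : PowerSeries R) ^ (n+1)) = 0 := by
          refine PowerSeries.X_pow_dvd_iff.1 ⟨a', mul_comm _ _⟩ k (by omega)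
        rw [h1, h2, sub_zero]
      obtain ⟨c, rfl⟩ := aux_xpow_dvd hpR hf n b' hlow
      -- compare coefficient n
      have hcoeff : r = PowerSeries.constantCoeff c * (p : R) := by
        have := congrArg (PowerSeries.coeff n) hab
        rw [PowerSeries.smul_eq_C_mul, PowerSeries.coeff_C_mul,
          PowerSeries.coeff_X_pow, if_pos rfl, mul_one] at this
        have h2 : PowerSeries.coeff n (a' * (PowerSeries.X : PowerSeries R) ^ (n+1)) = 0 :=
          PowerSeries.X_pow_dvd_iff.1 ⟨a', mul_comm _ _⟩ n (by omega)
        have h3 : PowerSeries.coeff n ((PowerSeries.X : PowerSeries R) ^ n * c * f)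
            = PowerSeries.constantCoeff c * (p : R) := by
          rw [mul_assoc]
          have := PowerSeries.coeff_X_pow_mul (c * f) n 0
          simp only [zero_add] at this
          rw [this, PowerSeries.coeff_zero_eq_constantCoeff, map_mul, hf]
        rw [map_add, h2, zero_add, h3] at this
        exact this.symm
      exact Ideal.mem_span_singleton.2 ⟨PowerSeries.constantCoeff c, by rw [hcoeff, mul_comm]⟩
    · intro hr
      obtain ⟨s, hs⟩ := Ideal.mem_span_singleton.1 hr
      have hXdvd : (PowerSeries.X : PowerSeries R) ∣ (f - PowerSeries.C (p : R)) := by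
        rw [PowerSeries.X_dvd_iff]; simp [hf]
      obtain ⟨u, hu⟩ := hXdvd
      have key : r • (PowerSeries.X : PowerSeries R) ^ n
          = (-(PowerSeries.C s * u)) * (PowerSeries.X : PowerSeries R) ^ (n+1)
            + (PowerSeries.C s * (PowerSeries.X : PowerSeries R) ^ n) * f := by
        rw [PowerSeries.smul_eq_C_mul, hs, map_mul]
        have : PowerSeries.C (p : R) = f - (PowerSeries.X : PowerSeries R) * u := by
          rw [← hu]; ring
        rw [this]; ring
      rw [key]
      exact Submodule.add_mem _
        (Submodule.mem_sup_left (Ideal.mem_span_singleton'.2 ⟨_, rfl⟩))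
        (Submodule.mem_sup_right (Ideal.mem_span_singleton'.2 ⟨_, rfl⟩))
  exact ⟨(LinearMap.quotKerEquivOfSurjective φ hsurj).symm.trans
    (Submodule.quotEquivOfEq _ _ hker)⟩
end

section
/- Let R be a commutative ring, p a prime that is a non-zero-divisor in R, and f ∈ R[[t]] with f(0) = p. Then the intersection over all n of the ideals (f) + t^n·R[[t]] in R[[t]] equals (f); equivalently, the t-adic filtration on R[[t]]/(f) is separated. -/
open PowerSeries

/-- If the constant coefficient of `f` is a non-zero-divisor, then `X^n ∣ f * c → X^n ∣ c`. -/
private lemma xpow_dvd_of_dvd_mul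
    {R : Type*} [CommRing R] (f : PowerSeries R)
    (hf : PowerSeries.constantCoeff f ∈ nonZeroDivisors R)
    (c : PowerSeries R) (n : ℕ)
    (h : (PowerSeries.X : PowerSeries R) ^ n ∣ f * c) :
    (PowerSeries.X : PowerSeries R) ^ n ∣ c := by
  rw [PowerSeries.X_pow_dvd_iff] at h ⊢
  intro i
  induction i using Nat.strong_induction_on with
  | _ i ih =>
    intro hi
    have hmul := h i hi
    rw [PowerSeries.coeff_mul] at hmul
    have hsum : ∑ q ∈ Finset.HasAntidiagonal.antidiagonal i,
        PowerSeries.coeff q.1 f * PowerSeries.coeff q.2 c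
        = PowerSeries.coeff 0 f * PowerSeries.coeff i c := by
      apply Finset.sum_eq_single (0, i)
      · rintro ⟨j, k⟩ hjk hne
        rw [Finset.HasAntidiagonal.mem_antidiagonal] at hjk
        have hj : j ≠ 0 := by
          rintro rfl
          simp_all
        have hk : k < i := by omega
        rw [ih k hk (hk.trans hi), mul_zero]
      · intro habs
        exact absurd (Finset.HasAntidiagonal.mem_antidiagonal.mpr (by simp)) habs
    rw [hsum] at hmul
    rw [PowerSeries.coeff_zero_eq_constantCoeff] at hmul
    exact hf.2 _ (by rwa [mul_comm] at hmul)

/-- For `f ∈ R⟦t⟧` with constant coefficient a prime `p` which is a non-zero-divisor in `R`,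
the intersection of the ideals `(f) + tⁿR⟦t⟧` equals `(f)`: the `t`-adic filtration on
`R⟦t⟧/(f)` is separated. -/
theorem tAdic_filtration_separated
    {R : Type*} [CommRing R] (p : ℕ) (hp : p.Prime)
    (hpR : (p : R) ∈ nonZeroDivisors R)
    (f : PowerSeries R) (hf : PowerSeries.constantCoeff f = (p : R)) :
    (⨅ n : ℕ, (Ideal.span {f} ⊔ Ideal.span {(PowerSeries.X : PowerSeries R) ^ n}))
      = Ideal.span {f} := by
  have hf' : PowerSeries.constantCoeff f ∈ nonZeroDivisors R := hf ▸ hpR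
  apply le_antisymm
  · intro g hg
    rw [Ideal.mem_iInf] at hg
    have hdec : ∀ n : ℕ, ∃ a : PowerSeries R,
        (PowerSeries.X : PowerSeries R) ^ n ∣ (g - a * f) := by
      intro n
      obtain ⟨y, hy, z, hz, hyz⟩ := Submodule.mem_sup.mp (hg n)
      obtain ⟨a, rfl⟩ := Ideal.mem_span_singleton.mp hy
      obtain ⟨b, rfl⟩ := Ideal.mem_span_singleton.mp hz
      exact ⟨a, by rw [← hyz]; ring_nf; exact Dvd.intro b rfl⟩
    choose a ha using hdec
    -- coefficients of `a` stabilize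
    have hstab : ∀ j i : ℕ, j ≤ i →
        PowerSeries.coeff j (a (j+1)) = PowerSeries.coeff j (a (i+1)) := by
      intro j i hji
      have h1 : (PowerSeries.X : PowerSeries R) ^ (j+1) ∣
          (a (i+1) - a (j+1)) * f := by
        have hd : (PowerSeries.X : PowerSeries R) ^ (j+1) ∣
            (g - a (j+1) * f) - (g - a (i+1) * f) :=
          dvd_sub (ha (j+1)) (dvd_trans (pow_dvd_pow _ (by omega)) (ha (i+1)))
        convert hd using 1
        ring
      have h2 := xpow_dvd_of_dvd_mul f hf' _ (j+1)
        (by rwa [mul_comm] at h1)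
      rw [PowerSeries.X_pow_dvd_iff] at h2
      have := h2 j (Nat.lt_succ_self j)
      rw [map_sub, sub_eq_zero] at this
      exact this.symm
    set h : PowerSeries R := PowerSeries.mk (fun i => PowerSeries.coeff i (a (i+1)))
      with hh
    rw [Ideal.mem_span_singleton]
    refine ⟨h, ?_⟩
    ext i
    have h1 : PowerSeries.coeff i (g - a (i+1) * f) = 0 :=
      (PowerSeries.X_pow_dvd_iff.mp (ha (i+1))) i (Nat.lt_succ_self i)
    rw [map_sub, sub_eq_zero] at h1
    rw [h1, mul_comm f h, PowerSeries.coeff_mul, PowerSeries.coeff_mul]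
    apply Finset.sum_congr rfl
    rintro ⟨j, k⟩ hjk
    rw [Finset.HasAntidiagonal.mem_antidiagonal] at hjk
    have hji : j ≤ i := by omega
    rw [hh, PowerSeries.coeff_mk, hstab j i hji]
  · exact le_iInf fun n => le_sup_left
end
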